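/- arXiv:2110.00715 — 2 statements merged into one kernel-verified Lean document; each statement's English description precedes it below -/
import Mathlib

section
/- If g : ℝ^n → ℝ^d is differentiable with L_g-Lipschitz Jacobian and sup_x ‖Dg(x)‖ ≤ M (operator norm), then for fixed ε > 0 the function φ(x) = √(‖g(x)‖² + ε²) − ε is differentiable and its gradient ∇φ(x) = Dg(x)ᵀ g(x)/√(‖g(x)‖² + ε²) is Lipschitz continuous with constant L_g + 2M²/ε. -/
/-!
Write `s(u) = √(‖u‖² + ε²)`, so that `φ = s ∘ g - ε` and `∇φ(x) = Dg(x)ᵀ σ(g x)` with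
`σ(u) = u / s(u)`. The map `σ` takes values in the unit ball and is `2/ε`-Lipschitz, because
`s ≥ ε` and `s` is `1`-Lipschitz. Splitting
`Dg(x)ᵀ σ(g x) - Dg(y)ᵀ σ(g y) = (Dg(x) - Dg(y))ᵀ σ(g x) + Dg(y)ᵀ (σ(g x) - σ(g y))`
gives the bound `L ‖x - y‖ + M · (2/ε) · M ‖x - y‖`, where `g` is `M`-Lipschitz by the mean
value inequality.
-/

open Real ContinuousLinearMap InnerProductSpace

lemma Real.sqrt_sq_add_le_add_abs_sub {c : ℝ} (hc : 0 ≤ c) (a b : ℝ) :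
    √(a ^ 2 + c) ≤ √(b ^ 2 + c) + |a - b| := by
  have hs : √(b ^ 2 + c) ^ 2 = b ^ 2 + c := sq_sqrt (by positivity)
  have hb : |b| ≤ √(b ^ 2 + c) := by
    rw [← sqrt_sq_eq_abs]; exact sqrt_le_sqrt (by linarith)
  have hcross : b * (a - b) ≤ √(b ^ 2 + c) * |a - b| :=
    (le_abs_self _).trans (abs_mul b (a - b) ▸ mul_le_mul_of_nonneg_right hb (abs_nonneg _))
  rw [sqrt_le_iff]
  refine ⟨by positivity, ?_⟩
  nlinarith [sq_abs (a - b)]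

lemma Real.abs_sqrt_sq_add_sub_sqrt_sq_add_le {c : ℝ} (hc : 0 ≤ c) (a b : ℝ) :
    |√(a ^ 2 + c) - √(b ^ 2 + c)| ≤ |a - b| := by
  rw [abs_sub_le_iff]
  constructor
  · linarith [sqrt_sq_add_le_add_abs_sub hc a b]
  · linarith [sqrt_sq_add_le_add_abs_sub hc b a, abs_sub_comm a b]

lemma ContinuousLinearMap.norm_apply_sub_apply_le {𝕜 E F : Type*} [NontriviallyNormedField 𝕜]
    [NormedAddCommGroup E] [NormedSpace 𝕜 E] [NormedAddCommGroup F] [NormedSpace 𝕜 F]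
    (A B : E →L[𝕜] F) (u w : E) :
    ‖A u - B w‖ ≤ ‖A - B‖ * ‖u‖ + ‖B‖ * ‖u - w‖ :=
  calc ‖A u - B w‖ = ‖(A - B) u + B (u - w)‖ := by simp only [sub_apply, map_sub]; abel_nf
    _ ≤ ‖A - B‖ * ‖u‖ + ‖B‖ * ‖u - w‖ :=
      (norm_add_le _ _).trans (add_le_add (le_opNorm _ _) (le_opNorm _ _))

section SmoothNorm

variable {F : Type*} [NormedAddCommGroup F] {ε : ℝ}

noncomputable def smoothNorm (ε : ℝ) (u : F) : ℝ := √(‖u‖ ^ 2 + ε ^ 2)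

lemma norm_le_smoothNorm (ε : ℝ) (u : F) : ‖u‖ ≤ smoothNorm ε u :=
  le_sqrt_of_sq_le (by nlinarith)

lemma le_smoothNorm (ε : ℝ) (u : F) : ε ≤ smoothNorm ε u :=
  le_sqrt_of_sq_le (by nlinarith [sq_nonneg ‖u‖])

lemma smoothNorm_pos (hε : ε ≠ 0) (u : F) : 0 < smoothNorm ε u :=
  sqrt_pos.2 (by positivity)

lemma abs_smoothNorm_sub_smoothNorm_le (ε : ℝ) (u w : F) :
    |smoothNorm ε u - smoothNorm ε w| ≤ ‖u - w‖ :=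
  (abs_sqrt_sq_add_sub_sqrt_sq_add_le (sq_nonneg ε) _ _).trans (abs_norm_sub_norm_le u w)

variable [NormedSpace ℝ F]

noncomputable def smoothNormalize (ε : ℝ) (u : F) : F := (smoothNorm ε u)⁻¹ • u

lemma norm_smoothNormalize_le_one (ε : ℝ) (u : F) : ‖smoothNormalize ε u‖ ≤ 1 := by
  have hs : 0 ≤ smoothNorm ε u := sqrt_nonneg _
  rw [smoothNormalize, norm_smul, norm_inv, norm_of_nonneg hs]
  exact inv_mul_le_one_of_le₀ (norm_le_smoothNorm ε u) hs

lemma smoothNorm_smul_smoothNormalize (hε : ε ≠ 0) (u : F) :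
    smoothNorm ε u • smoothNormalize ε u = u :=
  smul_inv_smul₀ (smoothNorm_pos hε u).ne' u

lemma norm_smoothNormalize_sub_le (hε : 0 < ε) (u w : F) :
    ‖smoothNormalize ε u - smoothNormalize ε w‖ ≤ 2 / ε * ‖u - w‖ := by
  set s := smoothNorm ε u
  set t := smoothNorm ε w
  have hs : 0 < s := smoothNorm_pos hε.ne' u
  have hclear : s • (smoothNormalize ε u - smoothNormalize ε w)
      = (u - w) + (t - s) • smoothNormalize ε w := by
    rw [smul_sub, sub_smul, smoothNorm_smul_smoothNormalize hε.ne',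
      smoothNorm_smul_smoothNormalize hε.ne']
    abel
  have hbound : s * ‖smoothNormalize ε u - smoothNormalize ε w‖ ≤ 2 * ‖u - w‖ :=
    calc s * ‖smoothNormalize ε u - smoothNormalize ε w‖
        = ‖(u - w) + (t - s) • smoothNormalize ε w‖ := by
          rw [← hclear, norm_smul, norm_of_nonneg hs.le]
      _ ≤ ‖u - w‖ + |t - s| * 1 := by
          grw [norm_add_le, norm_smul, norm_smoothNormalize_le_one, Real.norm_eq_abs]
      _ ≤ 2 * ‖u - w‖ := by
          rw [abs_sub_comm]; linarith [abs_smoothNorm_sub_smoothNorm_le ε u w]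
  rw [div_mul_eq_mul_div, le_div_iff₀ hε]
  nlinarith [le_smoothNorm ε u, norm_nonneg (smoothNormalize ε u - smoothNormalize ε w)]

end SmoothNorm

section Gradient

variable {E F : Type*} [NormedAddCommGroup E] [InnerProductSpace ℝ E] [CompleteSpace E]
  [NormedAddCommGroup F] [InnerProductSpace ℝ F] [CompleteSpace F]

lemma HasFDerivAt.hasGradientAt_smoothNorm_sub {g : E → F} {g' : E →L[ℝ] F} {x : E}
    (hg : HasFDerivAt g g' x) {ε : ℝ} (hε : ε ≠ 0) :
    HasGradientAt (fun y => smoothNorm ε (g y) - ε) (adjoint g' (smoothNormalize ε (g x))) x := by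
  have hs := smoothNorm_pos hε (g x)
  have hderiv := ((hg.norm_sq.add_const (ε ^ 2)).sqrt (sqrt_pos.1 hs).ne').sub_const ε
  rw [hasGradientAt_iff_hasFDerivAt]
  refine hderiv.congr_fderiv (ContinuousLinearMap.ext fun w => ?_)
  simp only [smoothNormalize, smoothNorm, toDual_apply_apply, adjoint_inner_left, smul_apply,
    comp_apply, innerSL_apply_apply, real_inner_smul_left, smul_eq_mul, nsmul_eq_mul,
    Nat.cast_ofNat]
  field_simp

end Gradient

theorem stmt_3 (n d : ℕ) (g : EuclideanSpace ℝ (Fin n) → EuclideanSpace ℝ (Fin d))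
    (L M ε : ℝ) (hε : 0 < ε)
    (hg : Differentiable ℝ g)
    (hL : ∀ x y, ‖fderiv ℝ g x - fderiv ℝ g y‖ ≤ L * ‖x - y‖)
    (hM : ∀ x, ‖fderiv ℝ g x‖ ≤ M)
    (φ : EuclideanSpace ℝ (Fin n) → ℝ)
    (hφ : ∀ x, φ x = Real.sqrt (‖g x‖ ^ 2 + ε ^ 2) - ε) :
    Differentiable ℝ φ ∧
      (∀ x, gradient φ x =
        ContinuousLinearMap.adjoint (fderiv ℝ g x)
          ((Real.sqrt (‖g x‖ ^ 2 + ε ^ 2))⁻¹ • g x)) ∧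
      (∀ x y, ‖gradient φ x - gradient φ y‖ ≤ (L + 2 * M ^ 2 / ε) * ‖x - y‖) := by
  obtain rfl : φ = fun y => smoothNorm ε (g y) - ε := funext hφ
  have hgrad x : HasGradientAt _ (adjoint (fderiv ℝ g x) (smoothNormalize ε (g x))) x :=
    (hg x).hasFDerivAt.hasGradientAt_smoothNorm_sub hε.ne'
  have hglip x y : ‖g x - g y‖ ≤ M * ‖x - y‖ :=
    convex_univ.norm_image_sub_le_of_norm_fderiv_le (fun z _ => hg z) (fun z _ => hM z)
      (Set.mem_univ y) (Set.mem_univ x)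
  refine ⟨fun x => (hgrad x).differentiableAt, fun x => (hgrad x).gradient, fun x y => ?_⟩
  have hM0 : 0 ≤ M := (norm_nonneg _).trans (hM x)
  set v := smoothNormalize ε ∘ g
  rw [(hgrad x).gradient, (hgrad y).gradient]
  calc ‖adjoint (fderiv ℝ g x) (v x) - adjoint (fderiv ℝ g y) (v y)‖
      ≤ ‖adjoint (fderiv ℝ g x) - adjoint (fderiv ℝ g y)‖ * ‖v x‖
        + ‖adjoint (fderiv ℝ g y)‖ * ‖v x - v y‖ := norm_apply_sub_apply_le _ _ _ _
    _ = ‖fderiv ℝ g x - fderiv ℝ g y‖ * ‖v x‖ + ‖fderiv ℝ g y‖ * ‖v x - v y‖ := by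
      rw [← map_sub, LinearIsometryEquiv.norm_map, LinearIsometryEquiv.norm_map]
    _ ≤ L * ‖x - y‖ * 1 + M * (2 / ε * (M * ‖x - y‖)) := by
      have hv : ‖v x - v y‖ ≤ 2 / ε * (M * ‖x - y‖) :=
        (norm_smoothNormalize_sub_le hε _ _).trans (by gcongr; exact hglip x y)
      gcongr
      exacts [(norm_nonneg _).trans (hL x y), hL x y, norm_smoothNormalize_le_one ε (g x), hM y]
    _ = (L + 2 * M ^ 2 / ε) * ‖x - y‖ := by ring
end

section
/- Let f : ℝ^n → ℝ be continuously differentiable, g : ℝ^n → ℝ^d continuously differentiable, and φ(x) = f(x) + ‖g(x)‖ (Euclidean norm). Suppose x_p → x̂ with ‖g(x̂)‖ > 0, ε_p → 0⁺, and ∇φ_{ε_p}(x_p) → 0, where φ_ε(x) = f(x) + √(‖g(x)‖² + ε²) − ε. Then ∇f(x̂) + Dg(x̂)ᵀ g(x̂)/‖g(x̂)‖ = 0, i.e., x̂ is a stationary point of φ. -/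
/-! For `ε ≠ 0` the smoothing `φ_ε = f + √(‖g‖² + ε²) - ε` is differentiable with
`∇φ_ε(x) = ∇f(x) + Dg(x)* g(x) / √(‖g x‖² + ε²)`. Since `f, g` are `C¹`, each piece of this
formula converges along `(ε_p, x_p) → (0, x̂)`, and because `g x̂ ≠ 0` the coefficient converges
to `1 / ‖g x̂‖`; the limit of the gradients is therefore `∇f(x̂) + Dg(x̂)* g(x̂) / ‖g x̂‖`,
which must be `0`. -/

open Filter Topology InnerProductSpace ContinuousLinearMap Gradient

theorem tendsto_sqrt_norm_sq_add_sq {ι G : Type*} [SeminormedAddCommGroup G] {l : Filter ι}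
    {v : ι → G} {a : G} {ε : ι → ℝ} (hv : Tendsto v l (𝓝 a)) (hε : Tendsto ε l (𝓝 0)) :
    Tendsto (fun p => √(‖v p‖ ^ 2 + ε p ^ 2)) l (𝓝 ‖a‖) := by
  have h := ((hv.norm.pow 2).add (hε.pow 2)).sqrt
  rwa [zero_pow two_ne_zero, add_zero, Real.sqrt_sq (norm_nonneg a)] at h

variable {E F : Type*} [NormedAddCommGroup E] [InnerProductSpace ℝ E] [CompleteSpace E]
  [NormedAddCommGroup F] [InnerProductSpace ℝ F] [CompleteSpace F]

theorem ContDiff.continuous_gradient {f : E → ℝ} (hf : ContDiff ℝ 1 f) : Continuous (∇ f) :=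
  (toDual ℝ E).symm.continuous.comp (hf.continuous_fderiv one_ne_zero)

theorem HasGradientAt.add {f g : E → ℝ} {f' g' x : E} (hf : HasGradientAt f f' x)
    (hg : HasGradientAt g g' x) : HasGradientAt (fun y => f y + g y) (f' + g') x := by
  rw [hasGradientAt_iff_hasFDerivAt, map_add]
  exact HasFDerivAt.add hf hg

theorem HasFDerivAt.hasGradientAt_sqrt_norm_sq_add_sq_sub {g : E → F} {g' : E →L[ℝ] F} {x : E}
    (hg : HasFDerivAt g g' x) {ε : ℝ} (hε : ε ≠ 0) :
    HasGradientAt (fun y => √(‖g y‖ ^ 2 + ε ^ 2) - ε)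
      ((√(‖g x‖ ^ 2 + ε ^ 2))⁻¹ • adjoint g' (g x)) x := by
  have hpos : ‖g x‖ ^ 2 + ε ^ 2 ≠ 0 := by positivity
  rw [hasGradientAt_iff_hasFDerivAt]
  refine ((hg.norm_sq.add_const (ε ^ 2)).sqrt hpos).sub_const ε |>.congr_fderiv ?_
  rw [innerSL_apply_comp, map_smul]
  ext v
  simp only [smul_apply, innerSL_apply_apply, toDual_apply_apply, smul_eq_mul,
    nsmul_eq_mul, Nat.cast_ofNat]
  field_simp

theorem stmt_14 (n d : ℕ) (f : EuclideanSpace ℝ (Fin n) → ℝ)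
    (g : EuclideanSpace ℝ (Fin n) → EuclideanSpace ℝ (Fin d))
    (hf : ContDiff ℝ 1 f) (hg : ContDiff ℝ 1 g)
    (φ : ℝ → EuclideanSpace ℝ (Fin n) → ℝ)
    (hφ : ∀ ε x, φ ε x = f x + (Real.sqrt (‖g x‖ ^ 2 + ε ^ 2) - ε))
    (xp : ℕ → EuclideanSpace ℝ (Fin n)) (εp : ℕ → ℝ) (hεpos : ∀ p, 0 < εp p)
    (xhat : EuclideanSpace ℝ (Fin n))
    (hx : Filter.Tendsto xp Filter.atTop (nhds xhat))
    (hε : Filter.Tendsto εp Filter.atTop (nhds 0))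
    (hgrad : Filter.Tendsto (fun p => gradient (φ (εp p)) (xp p)) Filter.atTop (nhds 0))
    (hgx : ‖g xhat‖ ≠ 0) :
    gradient f xhat + ContinuousLinearMap.adjoint (fderiv ℝ g xhat) (‖g xhat‖⁻¹ • g xhat) = 0 := by
  have hgradφ : ∀ p, ∇ (φ (εp p)) (xp p) = ∇ f (xp p) +
      (√(‖g (xp p)‖ ^ 2 + εp p ^ 2))⁻¹ • adjoint (fderiv ℝ g (xp p)) (g (xp p)) := fun p => by
    rw [show φ (εp p) = _ from funext (hφ (εp p))]
    exact ((hf.differentiable one_ne_zero _).hasGradientAt.add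
      ((hg.differentiable one_ne_zero _).hasFDerivAt.hasGradientAt_sqrt_norm_sq_add_sq_sub
        (hεpos p).ne')).gradient
  have hadjoint : Continuous fun x => adjoint (fderiv ℝ g x) (g x) :=
    (adjoint.continuous.comp (hg.continuous_fderiv one_ne_zero)).clm_apply hg.continuous
  have hlim : Tendsto (fun p => ∇ (φ (εp p)) (xp p)) atTop
      (𝓝 (∇ f xhat + ‖g xhat‖⁻¹ • adjoint (fderiv ℝ g xhat) (g xhat))) := by
    simp only [hgradφ]
    exact (hf.continuous_gradient.tendsto xhat |>.comp hx).add
      (((tendsto_sqrt_norm_sq_add_sq (hg.continuous.tendsto xhat |>.comp hx) hε).inv₀ hgx).smul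
        (hadjoint.tendsto xhat |>.comp hx))
  rw [map_smul]
  exact tendsto_nhds_unique hlim hgrad
end
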